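/- arXiv:1312.1934 — 2 statements merged into one kernel-verified Lean document; each statement's English description precedes it below -/
import Mathlib

section
/- The map p : S^1 × Y → S^1, p(z,x) = z^{-k}·φ(x), is a locally trivial fiber bundle with model fiber F = p^{-1}({1}) = {(z,x) ∈ S^1 × Y : φ(x) = z^k}: for every w ∈ S^1 there exists a trivialization of p with fiber F whose base set contains w. -/
/-! Translating the first coordinate by `g` multiplies `p` by `g ^ (-k)`. Hence a continuous
`(-k)`-th root `s` defined near `w` straightens `p⁻¹(U)` onto `U × p⁻¹{1}` via
`q ↦ (p q, (s (p q)⁻¹ * q.1, q.2))`, with inverse `(u, q) ↦ (s u * q.1, q.2)`. Such roots exist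
locally because `Circle.exp` is a local homeomorphism: `s = exp (θ / (-k))` for a local continuous
angle `θ`. -/

open Set

section MulProj

variable {G H Y : Type*} [Group G] [Group H]

def mulProj (f : G →* H) (φ : Y → H) (q : G × Y) : H :=
  f q.1 * φ q.2

variable {f : G →* H} {φ : Y → H} {s : H → G}

theorem mulProj_mul_left (g : G) (q : G × Y) :
    mulProj f φ (g * q.1, q.2) = f g * mulProj f φ q := by
  simp only [mulProj, map_mul, mul_assoc]

theorem mulProj_inv_section_mul (hfs : ∀ u, f (s u) = u) (q : G × Y) :
    mulProj f φ ((s (mulProj f φ q))⁻¹ * q.1, q.2) = 1 := by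
  rw [mulProj_mul_left, map_inv, hfs, inv_mul_cancel]

theorem mulProj_section_mul_of_mem_fiber (hfs : ∀ u, f (s u) = u) (u : H)
    (q : mulProj f φ ⁻¹' {1}) : mulProj f φ (s u * q.1.1, q.1.2) = u := by
  rw [mulProj_mul_left, hfs, q.2, mul_one]

variable [TopologicalSpace G] [TopologicalSpace H] [ContinuousMul H] [TopologicalSpace Y]

theorem continuous_mulProj (hf : Continuous f) (hφ : Continuous φ) : Continuous (mulProj f φ) :=
  (hf.comp continuous_fst).mul (hφ.comp continuous_snd)

variable [IsTopologicalGroup G]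

/-- The section `s` has to be a right inverse of `f` everywhere, not only on `U`: `toFun` must
land in the fiber `mulProj f φ ⁻¹' {1}` also outside its source. -/
noncomputable def mulProjTrivialization (f : G →* H) (φ : Y → H) (hf : Continuous f)
    (hφ : Continuous φ) {U : Set H} (hU : IsOpen U) (hs : ContinuousOn s U)
    (hfs : ∀ u, f (s u) = u) :
    Bundle.Trivialization (mulProj f φ ⁻¹' {1}) (mulProj f φ) where
  toFun q := (mulProj f φ q, ⟨((s (mulProj f φ q))⁻¹ * q.1, q.2), mulProj_inv_section_mul hfs q⟩)
  invFun z := (s z.1 * z.2.1.1, z.2.1.2)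
  source := mulProj f φ ⁻¹' U
  target := U ×ˢ univ
  map_source' q hq := ⟨hq, trivial⟩
  map_target' z hz := by
    simpa only [mem_preimage, mulProj_section_mul_of_mem_fiber hfs] using hz.1
  left_inv' q _ := by simp only [mul_inv_cancel_left]
  right_inv' z _ := by
    refine Prod.ext (mulProj_section_mul_of_mem_fiber hfs z.1 z.2) (Subtype.ext ?_)
    simp only [mulProj_section_mul_of_mem_fiber hfs, inv_mul_cancel_left]
  open_source := hU.preimage (continuous_mulProj hf hφ)
  open_target := hU.prod isOpen_univ
  continuousOn_toFun := by
    have hp := continuous_mulProj hf hφ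
    refine hp.continuousOn.prodMk (Topology.IsInducing.subtypeVal.continuousOn_iff.2 ?_)
    exact ((hs.comp hp.continuousOn (mapsTo_preimage _ U)).inv.mul
      continuous_fst.continuousOn).prodMk continuous_snd.continuousOn
  continuousOn_invFun :=
    ((hs.comp continuousOn_fst fun _ hz => hz.1).mul (by fun_prop)).prodMk (by fun_prop)
  baseSet := U
  open_baseSet := hU
  source_eq := rfl
  target_eq := rfl
  proj_toFun _ _ := rfl

end MulProj

namespace Circle

theorem exp_div_intCast_zpow {n : ℤ} (hn : n ≠ 0) (x : ℝ) : exp (x / n) ^ n = exp x := by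
  rw [← exp_intCast_mul, mul_div_cancel₀ _ (Int.cast_ne_zero.2 hn)]

theorem exists_continuousOn_angle (w : Circle) :
    ∃ U : Set Circle, IsOpen U ∧ w ∈ U ∧
      ∃ θ : Circle → ℝ, ContinuousOn θ U ∧ ∀ u, exp (θ u) = u := by
  classical
  have hexp := isLocalHomeomorph_circleExp
  set L := hexp.localInverseAt (Complex.arg w)
  refine ⟨L.source, L.open_source, ?_, L.source.piecewise L (fun u => Complex.arg u),
    L.continuousOn.congr (piecewise_eqOn _ _ _), fun u => ?_⟩
  · simpa only [exp_arg] using hexp.apply_self_mem_localInverseAt_source (x := Complex.arg w)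
  · by_cases hu : u ∈ L.source
    · rw [piecewise_eq_of_mem _ _ _ hu, hexp.apply_localInverseAt_of_mem hu]
    · rw [piecewise_eq_of_notMem _ _ _ hu, exp_arg]

theorem exists_continuousOn_zpow_rightInverse {n : ℤ} (hn : n ≠ 0) (w : Circle) :
    ∃ U : Set Circle, IsOpen U ∧ w ∈ U ∧
      ∃ s : Circle → Circle, ContinuousOn s U ∧ ∀ u, s u ^ n = u := by
  obtain ⟨U, hU, hwU, θ, hθ, hexp⟩ := exists_continuousOn_angle w
  exact ⟨U, hU, hwU, fun u => exp (θ u / n), exp.continuous.comp_continuousOn (hθ.div_const _),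
    fun u => by rw [exp_div_intCast_zpow hn, hexp]⟩

end Circle

/-- The map `p : S¹ × Y → S¹`, `p(z,x) = z^{-k}·φ(x)` (`k ≠ 0`), is a locally trivial fiber
bundle with model fiber `F = p⁻¹({1}) = {(z,x) : φ(x) = z^k}`: every `w ∈ S¹` lies in the base
set of some trivialization of `p` with fiber `F`. -/
theorem stmt_2 (Y : Type*) [TopologicalSpace Y] (φ : C(Y, Circle)) (k : ℤ) (hk : k ≠ 0) :
    ((fun q : Circle × Y => q.1 ^ (-k) * φ q.2) ⁻¹' {1}
      = {q : Circle × Y | φ q.2 = q.1 ^ k}) ∧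
    ∀ w : Circle,
      ∃ e : Bundle.Trivialization (↥((fun q : Circle × Y => q.1 ^ (-k) * φ q.2) ⁻¹' {1}))
              (fun q : Circle × Y => q.1 ^ (-k) * φ q.2),
        w ∈ e.baseSet := by
  refine ⟨?_, fun w => ?_⟩
  · ext q
    rw [mem_preimage, mem_singleton_iff, mul_eq_one_iff_inv_eq, zpow_neg, inv_inv]
    exact eq_comm
  · obtain ⟨U, hU, hwU, s, hs, hsec⟩ :=
      Circle.exists_continuousOn_zpow_rightInverse (neg_ne_zero.2 hk) w
    let e := mulProjTrivialization (zpowGroupHom (-k)) φ (continuous_zpow _) φ.continuous hU hs hsec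
    exact ⟨e, hwU⟩
end

section
/- If J is the image of a topological embedding g of the closed unit ball D^n = {y ∈ ℝ^n : ‖y‖ ≤ 1} into B satisfying g(y) = (0, y) whenever ‖y‖ = 1, then for every integer k the k-twist spin S_k ⊆ Σ is homeomorphic to the (n+1)-dimensional sphere. -/
noncomputable section

/-- The ball `B = {(b,x) ∈ ℂ × ℝⁿ : |b|² + ‖x‖² ≤ 1}`. -/
def diskBall (n : ℕ) : Set (ℂ × EuclideanSpace ℝ (Fin n)) :=
  {p | ‖p.1‖ ^ 2 + ‖p.2‖ ^ 2 ≤ 1}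

/-- The boundary sphere `∂B = {(b,x) : |b|² + ‖x‖² = 1}`. -/
def diskBoundary (n : ℕ) : Set (ℂ × EuclideanSpace ℝ (Fin n)) :=
  {p | ‖p.1‖ ^ 2 + ‖p.2‖ ^ 2 = 1}

/-- The sphere `Σ = {(a,b,x) ∈ ℂ × ℂ × ℝⁿ : |a|² + |b|² + ‖x‖² = 2}` of dimension `n+3`. -/
def bigSphere (n : ℕ) : Set (ℂ × ℂ × EuclideanSpace ℝ (Fin n)) :=
  {q | ‖q.1‖ ^ 2 + ‖q.2.1‖ ^ 2 + ‖q.2.2‖ ^ 2 = 2}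

/-- The `k`-twist spin of the disk knot `J ⊆ B`:
`S_k = {(a,b,x) ∈ Σ : (|a| ≥ 1 ∧ ((a/|a|)^{-k}·b, x) ∈ J) ∨ (|a| ≤ 1 ∧ b = 0)}`. -/
def twistSpin (n : ℕ) (k : ℤ) (J : Set (ℂ × EuclideanSpace ℝ (Fin n))) :
    Set (ℂ × ℂ × EuclideanSpace ℝ (Fin n)) :=
  {q ∈ bigSphere n |
    (1 ≤ ‖q.1‖ ∧ ((q.1 / ‖q.1‖) ^ (-k) * q.2.1, q.2.2) ∈ J) ∨
    (‖q.1‖ ≤ 1 ∧ q.2.1 = 0)}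

/-- The complement `W = Σ \ S_k` of the `k`-twist spin. -/
def spinComplement (n : ℕ) (k : ℤ) (J : Set (ℂ × EuclideanSpace ℝ (Fin n))) :
    Set (ℂ × ℂ × EuclideanSpace ℝ (Fin n)) :=
  bigSphere n \ twistSpin n k J

/-!
Put `Σ₀ = {(c, y) ∈ ℂ × ℝⁿ : |c|² + ‖y‖² = 2}`, an `(n+1)`-sphere. Where `|c| ≥ 1` (so `‖y‖ ≤ 1`)
send `(c, y)` to the point `(a, b, x) ∈ Σ` with `a/|a| = c/|c|` and `((a/|a|)^{-k} b, x) = g y`;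
where `|c| ≤ 1` send it to `(c, 0, y)`. Since `g y = (0, y)` on `∂Dⁿ`, the two formulas agree
on `|c| = 1`; the size of `|a|` tells the two pieces apart, and injectivity of `g` gives
injectivity on the first piece. This continuous bijection `Σ₀ → S_k` from a compact space onto a
Hausdorff one is a homeomorphism.
-/
open Function Set Metric

lemma IsCompact.nonempty_homeomorph_of_bijOn {X Y : Type*} [TopologicalSpace X]
    [TopologicalSpace Y] [T2Space Y] {s : Set X} {t : Set Y} {f : X → Y} (hs : IsCompact s)
    (hf : ContinuousOn f s) (hbij : BijOn f s t) : Nonempty (s ≃ₜ t) :=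
  have := isCompact_iff_compactSpace.mp hs
  ⟨Continuous.homeoOfEquivCompactToT2 (f := hbij.equiv f) (hf.mapsToRestrict hbij.mapsTo)⟩

section Retraction

variable {E : Type*} [NormedAddCommGroup E] [NormedSpace ℝ E]

def unitBallRetraction (y : E) : {y : E // ‖y‖ ≤ 1} :=
  ⟨(max 1 ‖y‖)⁻¹ • y, by
    rw [norm_smul, norm_inv, Real.norm_of_nonneg (by positivity)]
    exact inv_mul_le_one_of_le₀ (le_max_right _ _) (by positivity)⟩

@[fun_prop]
lemma continuous_unitBallRetraction : Continuous (unitBallRetraction (E := E)) :=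
  Continuous.subtype_mk (((continuous_const.max continuous_norm).inv₀
    fun _ => (zero_lt_one.trans_le (le_max_left _ _)).ne').smul continuous_id) _

lemma unitBallRetraction_of_norm_le {y : E} (hy : ‖y‖ ≤ 1) :
    unitBallRetraction y = ⟨y, hy⟩ := by
  simp [unitBallRetraction, max_eq_left hy]

end Retraction

lemma ne_zero_of_one_le_norm {E : Type*} [SeminormedAddGroup E] {x : E} (h : 1 ≤ ‖x‖) : x ≠ 0 :=
  ne_zero_of_norm_ne_zero (zero_lt_one.trans_le h).ne'

lemma Complex.mul_ofReal_div_norm {u : ℂ} (hu : ‖u‖ = 1) {s : ℝ} (hs : 0 < s) :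
    u * s / (‖u * s‖ : ℂ) = u := by
  rw [norm_mul, hu, one_mul, Complex.norm_real, Real.norm_of_nonneg hs.le,
    mul_div_cancel_right₀ _ (Complex.ofReal_ne_zero.mpr hs.ne')]

lemma Complex.norm_div_norm {c : ℂ} (hc : c ≠ 0) : ‖c / (‖c‖ : ℂ)‖ = 1 := by
  rw [norm_div, Complex.norm_real, norm_norm, div_self (norm_ne_zero_iff.mpr hc)]

section Spin

variable {E : Type*} [NormedAddCommGroup E]

-- The point `(a, b, x) ∈ Σ` with `a / |a| = u` and `((a / |a|) ^ (-k) * b, x) = p`.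
def spinPoint (k : ℤ) (u : ℂ) (p : ℂ × E) : ℂ × ℂ × E :=
  (u * Real.sqrt (2 - (‖p.1‖ ^ 2 + ‖p.2‖ ^ 2)), u ^ k * p.1, p.2)

variable {k : ℤ} {u u' : ℂ} {p p' : ℂ × E}

lemma one_le_sqrt_two_sub {r : ℝ} (hr : r ≤ 1) : 1 ≤ Real.sqrt (2 - r) :=
  Real.one_le_sqrt.mpr (by linarith)

lemma norm_spinPoint_fst (hu : ‖u‖ = 1) :
    ‖(spinPoint k u p).1‖ = Real.sqrt (2 - (‖p.1‖ ^ 2 + ‖p.2‖ ^ 2)) := by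
  rw [spinPoint, norm_mul, hu, one_mul, Complex.norm_real, Real.norm_of_nonneg (Real.sqrt_nonneg _)]

lemma norm_spinPoint_snd_fst (hu : ‖u‖ = 1) : ‖(spinPoint k u p).2.1‖ = ‖p.1‖ := by
  rw [spinPoint, norm_mul, norm_zpow, hu, one_zpow, one_mul]

lemma eq_and_eq_of_spinPoint_eq (hu : ‖u‖ = 1) (hu' : ‖u'‖ = 1)
    (hp : ‖p.1‖ ^ 2 + ‖p.2‖ ^ 2 ≤ 1)
    (h : spinPoint k u p = spinPoint k u' p') : u = u' ∧ p = p' := by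
  have hsqrt := congrArg (‖·.1‖) h
  simp only [norm_spinPoint_fst hu, norm_spinPoint_fst hu'] at hsqrt
  have hs : (Real.sqrt (2 - (‖p.1‖ ^ 2 + ‖p.2‖ ^ 2)) : ℂ) ≠ 0 :=
    Complex.ofReal_ne_zero.mpr (zero_lt_one.trans_le (one_le_sqrt_two_sub hp)).ne'
  simp only [spinPoint, Prod.mk.injEq] at h
  obtain ⟨h₁, h₂, h₃⟩ := h
  rw [hsqrt] at hs
  have huu : u = u' := by
    rw [hsqrt] at h₁
    exact mul_right_cancel₀ hs h₁
  subst huu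
  refine ⟨rfl, Prod.ext (mul_left_cancel₀ (zpow_ne_zero _ ?_) h₂) h₃⟩
  exact ne_zero_of_one_le_norm hu.ge

lemma spinPoint_zero_fst {x : E} (hx : ‖x‖ = 1) : spinPoint k u (0, x) = (u, 0, x) := by
  norm_num [spinPoint, hx]

lemma spinPoint_fst_div_norm {q : ℂ × ℂ × E} (hq : ‖q.1‖ ^ 2 + ‖q.2.1‖ ^ 2 + ‖q.2.2‖ ^ 2 = 2)
    (hq₀ : q.1 ≠ 0) :
    spinPoint k (q.1 / ‖q.1‖) ((q.1 / ‖q.1‖) ^ (-k) * q.2.1, q.2.2) = q := by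
  have hu := Complex.norm_div_norm hq₀
  have hu₀ : q.1 / ‖q.1‖ ≠ 0 := ne_zero_of_one_le_norm hu.ge
  have hsqrt : Real.sqrt (2 - (‖(q.1 / ‖q.1‖) ^ (-k) * q.2.1‖ ^ 2 + ‖q.2.2‖ ^ 2)) = ‖q.1‖ := by
    rw [norm_mul, norm_zpow, hu, one_zpow, one_mul, ← Real.sqrt_sq (norm_nonneg q.1)]
    congr 1; linarith
  simp only [spinPoint, hsqrt, ← mul_assoc, ← zpow_add₀ hu₀, add_neg_cancel, zpow_zero, one_mul,
    div_mul_cancel₀ _ (Complex.ofReal_ne_zero.mpr (norm_ne_zero_iff.mpr hq₀))]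

end Spin

section SpinMap

-- The slice `b = 0` of `Σ`.
def equatorSphere (E : Type*) [Norm E] : Set (ℂ × E) := {w | ‖w.1‖ ^ 2 + ‖w.2‖ ^ 2 = 2}

variable {E : Type*} [NormedAddCommGroup E] {w : ℂ × E}

lemma norm_snd_le_one_of_mem_equatorSphere (hw : w ∈ equatorSphere E) (h : 1 ≤ ‖w.1‖) :
    ‖w.2‖ ≤ 1 := by
  have hw : ‖w.1‖ ^ 2 + ‖w.2‖ ^ 2 = 2 := hw
  nlinarith [norm_nonneg w.2]

variable [NormedSpace ℝ E]

-- `g` is extended radially to all of `E` only to make the map total: on `equatorSphere E` it is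
-- evaluated where `1 ≤ ‖c‖`, hence `‖y‖ ≤ 1`.
def spinMap (k : ℤ) (g : {y : E // ‖y‖ ≤ 1} → ℂ × E) (w : ℂ × E) : ℂ × ℂ × E :=
  if 1 ≤ ‖w.1‖ then spinPoint k (w.1 / ‖w.1‖) (g (unitBallRetraction w.2)) else (w.1, 0, w.2)

variable {k : ℤ} {g : {y : E // ‖y‖ ≤ 1} → ℂ × E}

lemma spinMap_of_one_le (hw : w ∈ equatorSphere E) (h : 1 ≤ ‖w.1‖) :
    spinMap k g w = spinPoint k (w.1 / ‖w.1‖)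
      (g ⟨w.2, norm_snd_le_one_of_mem_equatorSphere hw h⟩) := by
  rw [spinMap, if_pos h, unitBallRetraction_of_norm_le]

lemma spinMap_of_norm_fst_le_one
    (hbd : ∀ y : {y : E // ‖y‖ ≤ 1}, ‖(y : E)‖ = 1 → g y = (0, (y : E)))
    (hw : w ∈ equatorSphere E) (h : ‖w.1‖ ≤ 1) : spinMap k g w = (w.1, 0, w.2) := by
  rcases h.lt_or_eq with h | h
  · exact if_neg h.not_ge
  · have hw' : ‖w.1‖ ^ 2 + ‖w.2‖ ^ 2 = 2 := hw
    have hy : ‖w.2‖ = 1 := by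
      rw [h] at hw'
      nlinarith [norm_nonneg w.2]
    rw [spinMap_of_one_le hw h.ge, hbd _ hy, spinPoint_zero_fst hy, h, Complex.ofReal_one, div_one]

lemma continuousOn_spinMap (hg : Continuous g)
    (hbd : ∀ y : {y : E // ‖y‖ ≤ 1}, ‖(y : E)‖ = 1 → g y = (0, (y : E))) :
    ContinuousOn (spinMap k g) (equatorSphere E) := by
  have hclosed : IsClosed {w : ℂ × E | 1 ≤ ‖w.1‖} := isClosed_le continuous_const (by fun_prop)
  refine ContinuousOn.if (fun w ⟨hw, hfr⟩ => ?_) ?_ (by fun_prop)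
  · have h : ‖w.1‖ = 1 := (frontier_le_subset_eq continuous_const (by fun_prop) hfr).symm
    have := spinMap_of_norm_fst_le_one (k := k) hbd hw h.le
    rwa [spinMap, if_pos h.ge] at this
  · rw [hclosed.closure_eq]
    have hne : ∀ w ∈ equatorSphere E ∩ {w | 1 ≤ ‖w.1‖}, w.1 ≠ 0 := fun w hw =>
      ne_zero_of_one_le_norm hw.2
    have hu : ContinuousOn (fun w : ℂ × E => w.1 / (‖w.1‖ : ℂ))
        (equatorSphere E ∩ {w | 1 ≤ ‖w.1‖}) :=
      ContinuousOn.div (by fun_prop) (by fun_prop) fun w hw => by simpa using hne w hw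
    unfold spinPoint
    refine ContinuousOn.prodMk (hu.mul (by fun_prop)) (ContinuousOn.prodMk ?_ (by fun_prop))
    exact (hu.zpow₀ k fun w hw => Or.inl (div_ne_zero (hne w hw) (by simpa using hne w hw))).mul
      (by fun_prop)

end SpinMap

section TwistSpin

variable {n : ℕ} {k : ℤ}

lemma spinPoint_mem_twistSpin {J : Set (ℂ × EuclideanSpace ℝ (Fin n))} {u : ℂ}
    {p : ℂ × EuclideanSpace ℝ (Fin n)} (hu : ‖u‖ = 1) (hpJ : p ∈ J) (hpB : p ∈ diskBall n) :
    spinPoint k u p ∈ twistSpin n k J := by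
  have hpB : ‖p.1‖ ^ 2 + ‖p.2‖ ^ 2 ≤ 1 := hpB
  have hs := one_le_sqrt_two_sub hpB
  refine ⟨?_, Or.inl ⟨(norm_spinPoint_fst hu).ge.trans' hs, ?_⟩⟩
  · change ‖(spinPoint k u p).1‖ ^ 2 + ‖(spinPoint k u p).2.1‖ ^ 2 + ‖p.2‖ ^ 2 = 2
    rw [norm_spinPoint_fst hu, norm_spinPoint_snd_fst hu, Real.sq_sqrt (by linarith)]
    ring
  · have hu₀ : u ≠ 0 := ne_zero_of_one_le_norm hu.ge
    simp only [spinPoint, Complex.mul_ofReal_div_norm hu (zero_lt_one.trans_le hs), ← mul_assoc,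
      ← zpow_add₀ hu₀, neg_add_cancel, zpow_zero, one_mul]
    exact hpJ

variable {g : {y : EuclideanSpace ℝ (Fin n) // ‖y‖ ≤ 1} → ℂ × EuclideanSpace ℝ (Fin n)}

lemma mapsTo_spinMap (hgB : range g ⊆ diskBall n) :
    MapsTo (spinMap k g) (equatorSphere (EuclideanSpace ℝ (Fin n))) (twistSpin n k (range g)) := by
  intro w hw
  by_cases h : 1 ≤ ‖w.1‖
  · rw [spinMap_of_one_le hw h]
    exact spinPoint_mem_twistSpin (Complex.norm_div_norm (ne_zero_of_one_le_norm h))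
      (mem_range_self _) (hgB (mem_range_self _))
  · rw [spinMap, if_neg h]
    refine ⟨?_, Or.inr ⟨(not_le.mp h).le, rfl⟩⟩
    change ‖w.1‖ ^ 2 + ‖(0 : ℂ)‖ ^ 2 + ‖w.2‖ ^ 2 = 2
    rw [norm_zero, ← (hw : ‖w.1‖ ^ 2 + ‖w.2‖ ^ 2 = 2)]
    ring

variable {w : ℂ × EuclideanSpace ℝ (Fin n)}

lemma one_le_norm_spinMap_fst_iff (hgB : range g ⊆ diskBall n)
    (hw : w ∈ equatorSphere (EuclideanSpace ℝ (Fin n))) :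
    1 ≤ ‖(spinMap k g w).1‖ ↔ 1 ≤ ‖w.1‖ := by
  by_cases h : 1 ≤ ‖w.1‖
  · rw [spinMap_of_one_le hw h,
      norm_spinPoint_fst (Complex.norm_div_norm (ne_zero_of_one_le_norm h))]
    exact iff_of_true (one_le_sqrt_two_sub (hgB (mem_range_self _))) h
  · simp [spinMap, h]

lemma injOn_spinMap (hg : Injective g) (hgB : range g ⊆ diskBall n) :
    InjOn (spinMap k g) (equatorSphere (EuclideanSpace ℝ (Fin n))) := by
  intro w hw w' hw' h
  by_cases hw₁ : 1 ≤ ‖w.1‖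
  · have hw₁' : 1 ≤ ‖w'.1‖ := by
      rwa [← one_le_norm_spinMap_fst_iff hgB hw', ← h, one_le_norm_spinMap_fst_iff hgB hw]
    rw [spinMap_of_one_le hw hw₁, spinMap_of_one_le hw' hw₁'] at h
    obtain ⟨hu, hp⟩ := eq_and_eq_of_spinPoint_eq
      (Complex.norm_div_norm (ne_zero_of_one_le_norm hw₁))
      (Complex.norm_div_norm (ne_zero_of_one_le_norm hw₁')) (hgB (mem_range_self _)) h
    have hy : w.2 = w'.2 := congrArg Subtype.val (hg hp)
    have hnorm : ‖w.1‖ = ‖w'.1‖ := by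
      have : ‖w.1‖ ^ 2 + ‖w.2‖ ^ 2 = ‖w'.1‖ ^ 2 + ‖w'.2‖ ^ 2 := hw.trans hw'.symm
      exact (sq_eq_sq₀ (norm_nonneg _) (norm_nonneg _)).mp (by rw [hy] at this; linarith)
    refine Prod.ext ?_ hy
    rw [← div_mul_cancel₀ w.1 (Complex.ofReal_ne_zero.mpr (norm_ne_zero_iff.mpr
        (ne_zero_of_one_le_norm hw₁))), hu, hnorm,
      div_mul_cancel₀ _ (Complex.ofReal_ne_zero.mpr (norm_ne_zero_iff.mpr
        (ne_zero_of_one_le_norm hw₁')))]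
  · have hw₁' : ¬ 1 ≤ ‖w'.1‖ := by
      rwa [← one_le_norm_spinMap_fst_iff hgB hw', ← h, one_le_norm_spinMap_fst_iff hgB hw]
    simp only [spinMap, hw₁, hw₁', if_false, Prod.mk.injEq] at h
    exact Prod.ext h.1 h.2.2

lemma surjOn_spinMap
    (hbd : ∀ y : {y : EuclideanSpace ℝ (Fin n) // ‖y‖ ≤ 1}, ‖(y : EuclideanSpace ℝ (Fin n))‖ = 1 →
      g y = (0, (y : EuclideanSpace ℝ (Fin n)))) :
    SurjOn (spinMap k g) (equatorSphere (EuclideanSpace ℝ (Fin n))) (twistSpin n k (range g)) := by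
  rintro q ⟨hq, ⟨hq₁, y, hy⟩ | ⟨hq₁, hb⟩⟩
  · have hq₀ := ne_zero_of_one_le_norm hq₁
    have hu := Complex.norm_div_norm hq₀
    have hy₁ : ‖(y : EuclideanSpace ℝ (Fin n))‖ ^ 2 ≤ 1 := pow_le_one₀ (norm_nonneg _) y.2
    have hs := one_le_sqrt_two_sub hy₁
    have hw₁ : ‖q.1 / ‖q.1‖ * (Real.sqrt (2 - ‖(y : EuclideanSpace ℝ (Fin n))‖ ^ 2) : ℂ)‖ =
        Real.sqrt (2 - ‖(y : EuclideanSpace ℝ (Fin n))‖ ^ 2) := by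
      rw [norm_mul, hu, one_mul, Complex.norm_real, Real.norm_of_nonneg (Real.sqrt_nonneg _)]
    have hw : (q.1 / ‖q.1‖ * (Real.sqrt (2 - ‖(y : EuclideanSpace ℝ (Fin n))‖ ^ 2) : ℂ),
        (y : EuclideanSpace ℝ (Fin n))) ∈ equatorSphere (EuclideanSpace ℝ (Fin n)) := by
      change _ ^ 2 + _ = _
      rw [hw₁, Real.sq_sqrt (by linarith)]
      ring
    refine ⟨_, hw, ?_⟩
    rw [spinMap_of_one_le hw (hw₁.ge.trans' hs), Complex.mul_ofReal_div_norm hu (by linarith)]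
    simp only [Subtype.coe_eta, hy]
    exact spinPoint_fst_div_norm hq hq₀
  · have hw : (q.1, q.2.2) ∈ equatorSphere (EuclideanSpace ℝ (Fin n)) := by
      have hq : ‖q.1‖ ^ 2 + ‖q.2.1‖ ^ 2 + ‖q.2.2‖ ^ 2 = 2 := hq
      rwa [hb, norm_zero, zero_pow two_ne_zero, add_zero] at hq
    exact ⟨_, hw,
      (spinMap_of_norm_fst_le_one hbd hw hq₁).trans (Prod.ext rfl (Prod.ext hb.symm rfl))⟩

end TwistSpin

lemma nonempty_homeomorph_equatorSphere (n : ℕ) :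
    Nonempty (equatorSphere (EuclideanSpace ℝ (Fin n)) ≃ₜ
      sphere (0 : EuclideanSpace ℝ (Fin (n + 2))) 1) := by
  let F := WithLp 2 (ℂ × EuclideanSpace ℝ (Fin n))
  have hrank : Module.finrank ℝ F = n + 2 := by
    rw [(WithLp.linearEquiv 2 ℝ (ℂ × EuclideanSpace ℝ (Fin n))).finrank_eq,
      Module.finrank_prod, Complex.finrank_real_complex, finrank_euclideanSpace_fin, add_comm]
  let L : EuclideanSpace ℝ (Fin (n + 2)) ≃ₗᵢ[ℝ] F :=
    ((stdOrthonormalBasis ℝ F).reindex (finCongr hrank)).repr.symm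
  let e : EuclideanSpace ℝ (Fin (n + 2)) ≃ₜ ℂ × EuclideanSpace ℝ (Fin n) :=
    (Homeomorph.smulOfNeZero (Real.sqrt 2) (by positivity)).trans
      (L.toHomeomorph.trans (WithLp.prodContinuousLinearEquiv 2 ℝ ℂ _).toHomeomorph)
  have he : ∀ v, ‖(e v).1‖ ^ 2 + ‖(e v).2‖ ^ 2 = 2 * ‖v‖ ^ 2 := fun v => by
    change ‖(L (Real.sqrt 2 • v)).fst‖ ^ 2 + ‖(L (Real.sqrt 2 • v)).snd‖ ^ 2 = _
    rw [← WithLp.prod_norm_sq_eq_of_L2, L.norm_map, norm_smul, mul_pow, Real.norm_of_nonneg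
      (Real.sqrt_nonneg _), Real.sq_sqrt zero_le_two]
  refine ⟨(e.subtype fun v => ?_).symm⟩
  change ‖v - 0‖ = 1 ↔ ‖(e v).1‖ ^ 2 + ‖(e v).2‖ ^ 2 = 2
  rw [sub_zero, he]
  constructor
  · intro h; rw [h]; norm_num
  · intro h; nlinarith [norm_nonneg v]

/-- If `J` is the image of a topological embedding `g` of the closed unit ball `Dⁿ` into `B`
with `g(y) = (0, y)` whenever `‖y‖ = 1`, then for every integer `k` the `k`-twist spin
`S_k ⊆ Σ` is homeomorphic to the `(n+1)`-dimensional sphere. -/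
theorem stmt_11 (n : ℕ) (k : ℤ)
    (J : Set (ℂ × EuclideanSpace ℝ (Fin n)))
    (g : {y : EuclideanSpace ℝ (Fin n) // ‖y‖ ≤ 1} → ℂ × EuclideanSpace ℝ (Fin n))
    (hg : Topology.IsEmbedding g)
    (hgB : Set.range g ⊆ diskBall n)
    (hgbd : ∀ y : {y : EuclideanSpace ℝ (Fin n) // ‖y‖ ≤ 1}, ‖(y : EuclideanSpace ℝ (Fin n))‖ = 1 →
        g y = (0, (y : EuclideanSpace ℝ (Fin n))))
    (hJ : J = Set.range g) :
    Nonempty (↥(twistSpin n k J) ≃ₜ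
      ↥(Metric.sphere (0 : EuclideanSpace ℝ (Fin (n + 2))) 1)) := by
  subst hJ
  obtain ⟨e⟩ := nonempty_homeomorph_equatorSphere n
  have hcompact : IsCompact (equatorSphere (EuclideanSpace ℝ (Fin n))) :=
    isCompact_iff_compactSpace.mpr e.symm.compactSpace
  obtain ⟨f⟩ := hcompact.nonempty_homeomorph_of_bijOn
    (continuousOn_spinMap (k := k) hg.continuous hgbd)
    ⟨mapsTo_spinMap hgB, injOn_spinMap hg.injective hgB, surjOn_spinMap hgbd⟩
  exact ⟨f.symm.trans e⟩

end
end
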